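/- Suppose every real root of Q is positive, w₀' > 0, Q(t) < 0 for all t ∈ [0, w₀'], and ξ(w₀') > 0. Let w be a profile solution with initial slope w₀', let r₀ be its first zero, and let r_M be the first critical point of w in (0, r₀). Then, setting m = μ(w₀') − ξ(w₀')·δ₊(w₀')/4 (which is positive), one has r₀² ≥ r_M² ≥ (4·ξ(w₀')·w₀'/m)·(1 − w₀'³/(3m)). -/

import Mathlib

open Real Set Filter MeasureTheory Topology

set_option maxHeartbeats 1000000

/-- The cubic polynomial `Q(t) = t³ + 2c₀t² + (c₀² + λ)t − p/2`. -/
noncomputable def Qpoly (c₀ lam p t : ℝ) : ℝ :=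
  t ^ 3 + 2 * c₀ * t ^ 2 + (c₀ ^ 2 + lam) * t - p / 2

/-- The principal curvature `κ(r) = w(r)/(r·√(1 + w(r)²))`. -/
noncomputable def kappaFun (w : ℝ → ℝ) (r : ℝ) : ℝ :=
  w r / (r * Real.sqrt (1 + (w r) ^ 2))

/-- The interval `(0, r⁎)` (with possibly infinite right endpoint) as a subset of `ℝ`. -/
def profDom (rstar : EReal) : Set ℝ := {r : ℝ | 0 < r ∧ (r : EReal) < rstar}

/-- A profile solution with initial slope `w₀'` on the interval `(0, r⁎)`:
a `C²` function satisfying the profile ODE with `w(r) → 0` and `w'(r) → w₀'` as `r → 0⁺`. -/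
structure IsProfileSolution (c₀ lam p w₀' : ℝ) (rstar : EReal) (w : ℝ → ℝ) : Prop where
  pos : 0 < rstar
  smooth : ContDiffOn ℝ 2 w (profDom rstar)
  ode : ∀ r ∈ profDom rstar,
    deriv (deriv w) r =
      -(deriv w r) / r + 5 * w r * (deriv w r) ^ 2 / (2 * (1 + (w r) ^ 2))
        + w r * (1 + (w r) ^ 2) / r ^ 2
        + (r / 2) * (1 + (w r) ^ 2) ^ ((5 : ℝ) / 2) * Qpoly c₀ lam p (kappaFun w r)
  lim_w : Tendsto w (nhdsWithin 0 (Set.Ioi 0)) (nhds 0)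
  lim_w' : Tendsto (deriv w) (nhdsWithin 0 (Set.Ioi 0)) (nhds w₀')

/-- A maximal profile solution: a profile solution that admits no proper extension. -/
def IsMaximal (c₀ lam p w₀' : ℝ) (rstar : EReal) (w : ℝ → ℝ) : Prop :=
  IsProfileSolution c₀ lam p w₀' rstar w ∧
    ∀ (rstar' : EReal) (w' : ℝ → ℝ), IsProfileSolution c₀ lam p w₀' rstar' w' →
      Set.EqOn w w' (profDom rstar) → rstar' ≤ rstar

/-- `δ₊(w₀') = min{−Q(t) : 0 ≤ t ≤ w₀'}`. -/
noncomputable def deltaPlus (c₀ lam p w₀' : ℝ) : ℝ :=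
  sInf ((fun t => -Qpoly c₀ lam p t) '' Set.Icc 0 w₀')

/-- `μ(w₀') = max{−Q(t) : 0 ≤ t ≤ w₀'}`. -/
noncomputable def muQ (c₀ lam p w₀' : ℝ) : ℝ :=
  sSup ((fun t => -Qpoly c₀ lam p t) '' Set.Icc 0 w₀')

/-- `δ₋ = min{−Q(t) : t ≤ 0}`. -/
noncomputable def deltaMinus (c₀ lam p : ℝ) : ℝ :=
  sInf ((fun t => -Qpoly c₀ lam p t) '' Set.Iic 0)

/-- `ξ(w₀') = 1 − 64·w₀'³/(27·δ₊(w₀'))`. -/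
noncomputable def xiQ (c₀ lam p w₀' : ℝ) : ℝ :=
  1 - 64 * w₀' ^ 3 / (27 * deltaPlus c₀ lam p w₀')

/-- `r₀` is the first zero of `w`: `w > 0` on `(0, r₀)` and `w(r₀) = 0`. -/
def IsFirstZero (rstar : EReal) (w : ℝ → ℝ) (r₀ : ℝ) : Prop :=
  0 < r₀ ∧ (r₀ : EReal) < rstar ∧ (∀ r ∈ Set.Ioo 0 r₀, 0 < w r) ∧ w r₀ = 0

/-- `rM` is the first critical point of `w` in `(0, r₀)`. -/
def IsFirstCrit (w : ℝ → ℝ) (r₀ rM : ℝ) : Prop :=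
  rM ∈ Set.Ioo 0 r₀ ∧ deriv w rM = 0 ∧ ∀ r ∈ Set.Ioo 0 rM, deriv w r ≠ 0

/-- The filter of real numbers approaching the (possibly infinite) endpoint `r⁎` from the left. -/
noncomputable def leftLim (rstar : EReal) : Filter ℝ :=
  Filter.comap (fun r : ℝ => (r : EReal)) (nhdsWithin rstar (Set.Iio rstar))

-- auxiliary defs
noncomputable def Sfun (w : ℝ → ℝ) (r : ℝ) : ℝ := Real.sqrt (1 + w r ^ 2)

noncomputable def vfun (w : ℝ → ℝ) (r : ℝ) : ℝ := w r / Sfun w r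

noncomputable def Gfun (w : ℝ → ℝ) (r : ℝ) : ℝ :=
  r ^ 2 * (deriv w r / Sfun w r ^ 3) - r * vfun w r

noncomputable def Gder (c₀ lam p : ℝ) (w : ℝ → ℝ) (r : ℝ) : ℝ :=
  -(r ^ 2 / 2) * (w r * (deriv w r) ^ 2 / Sfun w r ^ 5)
    + (r ^ 3 / 2) * (Sfun w r ^ 2) * Qpoly c₀ lam p (kappaFun w r)

lemma Spos (w : ℝ → ℝ) (r : ℝ) : 0 < Sfun w r := Real.sqrt_pos.mpr (by positivity)

lemma Ssq (w : ℝ → ℝ) (r : ℝ) : Sfun w r ^ 2 = 1 + w r ^ 2 := Real.sq_sqrt (by positivity)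

lemma Sone (w : ℝ → ℝ) (r : ℝ) : 1 ≤ Sfun w r := by
  nlinarith [Spos w r, Ssq w r, sq_nonneg (w r)]

lemma isOpen_profDom (rstar : EReal) : IsOpen (profDom rstar) := by
  have : profDom rstar = Ioi (0:ℝ) ∩ ((fun r : ℝ => (r : EReal)) ⁻¹' Iio rstar) := rfl
  rw [this]
  exact isOpen_Ioi.inter (isOpen_Iio.preimage continuous_coe_real_ereal)

variable {c₀ lam p w₀' : ℝ} {rstar : EReal} {w : ℝ → ℝ}

lemma hw_deriv (hsol : IsProfileSolution c₀ lam p w₀' rstar w) {r : ℝ}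
    (hr : r ∈ profDom rstar) : HasDerivAt w (deriv w r) r :=
  (((hsol.smooth.differentiableOn (by norm_num)) r hr).differentiableAt
    ((isOpen_profDom rstar).mem_nhds hr)).hasDerivAt

lemma hw_deriv2 (hsol : IsProfileSolution c₀ lam p w₀' rstar w) {r : ℝ}
    (hr : r ∈ profDom rstar) : HasDerivAt (deriv w) (deriv (deriv w) r) r := by
  have h1 : ContDiffOn ℝ 1 (deriv w) (profDom rstar) :=
    hsol.smooth.deriv_of_isOpen (isOpen_profDom rstar) (by norm_num)
  exact ((h1.differentiableOn one_ne_zero r hr).differentiableAt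
    ((isOpen_profDom rstar).mem_nhds hr)).hasDerivAt

lemma hS_deriv {r b : ℝ} (hw : HasDerivAt w b r) :
    HasDerivAt (Sfun w) (w r * b / Sfun w r) r := by
  have h1 : HasDerivAt (fun x => 1 + w x ^ 2) (2 * w r * b) r := by
    have := (hw.pow 2).const_add (1:ℝ)
    simpa using this
  have h2 := h1.sqrt (by positivity)
  refine h2.congr_deriv ?_
  rw [Sfun]
  field_simp

lemma hv_deriv {r b : ℝ} (hw : HasDerivAt w b r) :
    HasDerivAt (vfun w) (b / Sfun w r ^ 3) r := by
  have h := hw.div (hS_deriv hw) (ne_of_gt (Spos w r))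
  refine h.congr_deriv ?_
  have hS := Ssq w r
  have hS0 : Sfun w r ≠ 0 := ne_of_gt (Spos w r)
  field_simp
  linear_combination b * hS

lemma kappa_eq (r : ℝ) : kappaFun w r = vfun w r / r := by
  rw [kappaFun, vfun, Sfun, div_div, mul_comm]

lemma v_eq_r_kappa {r : ℝ} (hr : r ≠ 0) : vfun w r = r * kappaFun w r := by
  rw [kappa_eq]; field_simp

lemma hkappa_deriv {r b : ℝ} (hw : HasDerivAt w b r) (hr : r ≠ 0) :
    HasDerivAt (kappaFun w) (b / Sfun w r ^ 3 / r - vfun w r / r ^ 2) r := by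
  have h : kappaFun w = fun x => vfun w x / x := funext fun x => kappa_eq x
  rw [h]
  have := (hv_deriv hw).div (hasDerivAt_id r) hr
  have hS0 : Sfun w r ≠ 0 := ne_of_gt (Spos w r)
  refine this.congr_deriv ?_
  simp only [id]
  field_simp

lemma rpow52 (x : ℝ) (hx : 0 ≤ x) : x ^ ((5:ℝ)/2) = Real.sqrt x ^ 5 := by
  rw [Real.sqrt_eq_rpow, ← Real.rpow_natCast (x ^ ((1:ℝ)/2)) 5, ← Real.rpow_mul hx]
  norm_num

lemma hode' (hsol : IsProfileSolution c₀ lam p w₀' rstar w) {r : ℝ}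
    (hr : r ∈ profDom rstar) :
    deriv (deriv w) r = -(deriv w r)/r + 5 * w r * (deriv w r)^2 / (2 * Sfun w r ^ 2)
      + w r * Sfun w r ^ 2 / r ^ 2
      + (r/2) * Sfun w r ^ 5 * Qpoly c₀ lam p (kappaFun w r) := by
  have hode := hsol.ode r hr
  rw [rpow52 _ (by positivity)] at hode
  rw [hode, ← Ssq w r, Real.sqrt_sq (le_of_lt (Spos w r))]

lemma hG_deriv (hsol : IsProfileSolution c₀ lam p w₀' rstar w) {r : ℝ}
    (hr : r ∈ profDom rstar) : HasDerivAt (Gfun w) (Gder c₀ lam p w r) r := by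
  have hw := hw_deriv hsol hr
  have hw2 := hw_deriv2 hsol hr
  have hS := hS_deriv hw
  have hS0 : Sfun w r ≠ 0 := ne_of_gt (Spos w r)
  have hr0 : r ≠ 0 := ne_of_gt hr.1
  have hS3 : HasDerivAt (fun x => Sfun w x ^ 3)
      ((3:ℕ) * Sfun w r ^ 2 * (w r * deriv w r / Sfun w r)) r := by
    simpa [Pi.pow_def] using hS.pow 3
  have hF : HasDerivAt (fun x => deriv w x / Sfun w x ^ 3)
      ((deriv (deriv w) r * Sfun w r ^ 3 -
        deriv w r * ((3:ℕ) * Sfun w r ^ 2 * (w r * deriv w r / Sfun w r))) / (Sfun w r ^ 3) ^ 2) r :=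
    hw2.div hS3 (pow_ne_zero _ hS0)
  have hA : HasDerivAt (fun x => x ^ 2 * (deriv w x / Sfun w x ^ 3)) _ r :=
    (hasDerivAt_pow 2 r).mul hF
  have hB : HasDerivAt (fun x => x * vfun w x) _ r := (hasDerivAt_id r).mul (hv_deriv hw)
  have hG : HasDerivAt (Gfun w) _ r := hA.sub hB
  refine hG.congr_deriv ?_
  rw [hode' hsol hr]
  have hsq := Ssq w r
  rw [Gder, vfun]
  simp only [id]
  field_simp
  ring_nf

lemma lim_wdiv (hsol : IsProfileSolution c₀ lam p w₀' rstar w) {b : ℝ} (hbpos : 0 < b)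
    (hsub : Ioo 0 b ⊆ profDom rstar) :
    Tendsto (fun r => w r / r) (𝓝[>](0:ℝ)) (𝓝 w₀') := by
  rw [Metric.tendsto_nhdsWithin_nhds]
  intro ε hε
  have h1 : {x : ℝ | deriv w x ∈ Metric.ball w₀' (ε/2)} ∈ 𝓝[>](0:ℝ) :=
    hsol.lim_w' (Metric.ball_mem_nhds w₀' (by positivity))
  obtain ⟨δ₁, hδ₁pos, hδ₁⟩ := mem_nhdsGT_iff_exists_Ioo_subset.mp h1
  refine ⟨min δ₁ b, lt_min hδ₁pos hbpos, ?_⟩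
  intro r hr hrd
  rw [Real.dist_eq, sub_zero] at hrd
  have hr0 : 0 < r := hr
  have hrδ : r < min δ₁ b := by rwa [abs_of_pos hr0] at hrd
  have hrb : r < b := lt_of_lt_of_le hrδ (min_le_right _ _)
  have hrδ₁ : r < δ₁ := lt_of_lt_of_le hrδ (min_le_left _ _)
  have key : ∀ s ∈ Ioo (0:ℝ) r, |w r - w₀' * r - (w s - w₀' * s)| ≤ ε/2 * r := by
    intro s hs
    have hsub2 : Icc s r ⊆ Ioo 0 b := fun x hx =>
      ⟨lt_of_lt_of_le hs.1 hx.1, lt_of_le_of_lt hx.2 hrb⟩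
    have hder : ∀ x ∈ Icc s r, HasDerivWithinAt (fun y => w y - w₀' * y)
        (deriv w x - w₀') (Icc s r) x := by
      intro x hx
      have h := (hw_deriv hsol (hsub (hsub2 hx))).sub
        ((hasDerivAt_id x).const_mul w₀')
      simpa [Pi.sub_def] using h.hasDerivWithinAt
    have hbound : ∀ x ∈ Icc s r, ‖deriv w x - w₀'‖ ≤ ε/2 := by
      intro x hx
      have hxδ : x ∈ Ioo 0 δ₁ := ⟨lt_of_lt_of_le hs.1 hx.1, lt_of_le_of_lt hx.2 hrδ₁⟩
      have := hδ₁ hxδ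
      rw [mem_setOf_eq, Metric.mem_ball, Real.dist_eq] at this
      rw [Real.norm_eq_abs]
      exact le_of_lt this
    have := Convex.norm_image_sub_le_of_norm_hasDerivWithin_le hder hbound
      (convex_Icc s r) (left_mem_Icc.mpr (le_of_lt hs.2)) (right_mem_Icc.mpr (le_of_lt hs.2))
    rw [Real.norm_eq_abs, Real.norm_eq_abs] at this
    calc |w r - w₀' * r - (w s - w₀' * s)| ≤ ε/2 * |r - s| := this
      _ ≤ ε/2 * r := by
          rw [abs_of_pos (by linarith [hs.1, hs.2] : (0:ℝ) < r - s)]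
          nlinarith [hs.1, le_of_lt hε]
  have hlim2 : Tendsto (fun s => |w r - w₀' * r - (w s - w₀' * s)|) (𝓝[>](0:ℝ))
      (𝓝 |w r - w₀' * r|) := by
    have h0 : Tendsto (fun s : ℝ => w s - w₀' * s) (𝓝[>](0:ℝ)) (𝓝 0) := by
      have h2 : Tendsto (fun s : ℝ => w₀' * s) (𝓝[>](0:ℝ)) (𝓝 0) := by
        have h3 : Tendsto (fun s : ℝ => w₀' * s) (𝓝 (0:ℝ)) (𝓝 (w₀' * 0)) :=
          (continuous_const.mul continuous_id).tendsto 0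
        rw [mul_zero] at h3
        exact h3.mono_left nhdsWithin_le_nhds
      simpa using hsol.lim_w.sub h2
    have := (tendsto_const_nhds (x := w r - w₀' * r)).sub h0
    rw [sub_zero] at this
    exact this.abs
  have hfinal : |w r - w₀' * r| ≤ ε/2 * r :=
    le_of_tendsto hlim2 (Filter.eventually_of_mem (Ioo_mem_nhdsGT_of_mem ⟨le_refl 0, hr0⟩) key)
  rw [Real.dist_eq]
  have heq : w r / r - w₀' = (w r - w₀' * r) / r := by field_simp
  rw [heq, abs_div, abs_of_pos hr0]
  rw [div_lt_iff₀ hr0]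
  nlinarith

lemma limS (hsol : IsProfileSolution c₀ lam p w₀' rstar w) :
    Tendsto (Sfun w) (𝓝[>](0:ℝ)) (𝓝 1) := by
  have hc : Continuous fun t : ℝ => Real.sqrt (1 + t ^ 2) := by
    exact Real.continuous_sqrt.comp (by continuity)
  have h := (hc.tendsto 0).comp hsol.lim_w
  norm_num at h
  exact h

lemma limkappa (hsol : IsProfileSolution c₀ lam p w₀' rstar w) {b : ℝ} (hbpos : 0 < b)
    (hsub : Ioo 0 b ⊆ profDom rstar) :
    Tendsto (kappaFun w) (𝓝[>](0:ℝ)) (𝓝 w₀') := by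
  have h := (lim_wdiv hsol hbpos hsub).div (limS hsol) one_ne_zero
  rw [div_one] at h
  apply h.congr
  intro r
  unfold kappaFun Sfun
  simp only [Pi.div_apply]
  rw [div_div]

lemma limv' (hsol : IsProfileSolution c₀ lam p w₀' rstar w) :
    Tendsto (fun r => deriv w r / Sfun w r ^ 3) (𝓝[>](0:ℝ)) (𝓝 w₀') := by
  have h := hsol.lim_w'.div ((limS hsol).pow 3) (by norm_num)
  norm_num at h
  exact h

lemma limG (hsol : IsProfileSolution c₀ lam p w₀' rstar w) :
    Tendsto (Gfun w) (𝓝[>](0:ℝ)) (𝓝 0) := by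
  have hid : Tendsto (fun r : ℝ => r) (𝓝[>](0:ℝ)) (𝓝 0) := by
    exact tendsto_id.mono_left nhdsWithin_le_nhds
  have h1 : Tendsto (fun r : ℝ => r ^ 2 * (deriv w r / Sfun w r ^ 3)) (𝓝[>](0:ℝ)) (𝓝 0) := by
    have := ((hid.pow 2).mul (limv' hsol))
    norm_num at this
    exact this
  have h2 : Tendsto (fun r : ℝ => r * vfun w r) (𝓝[>](0:ℝ)) (𝓝 0) := by
    have hv : Tendsto (vfun w) (𝓝[>](0:ℝ)) (𝓝 0) := by
      have := hsol.lim_w.div (limS hsol) one_ne_zero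
      norm_num at this
      exact this
    have := hid.mul hv
    norm_num at this
    exact this
  have := h1.sub h2
  norm_num at this
  exact this

lemma int_le {F F' : ℝ → ℝ} {b L : ℝ}
    (hF : ∀ x ∈ Ioo (0:ℝ) b, HasDerivAt F (F' x) x)
    (hF' : ∀ x ∈ Ioo (0:ℝ) b, F' x ≤ 0)
    (hlim : Tendsto F (𝓝[>](0:ℝ)) (𝓝 L)) :
    ∀ r ∈ Ioo (0:ℝ) b, F r ≤ L := by
  intro r hr
  have key : ∀ s ∈ Ioo (0:ℝ) r, F r ≤ F s := by
    intro s hs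
    have hsub : Icc s r ⊆ Ioo 0 b := fun x hx =>
      ⟨lt_of_lt_of_le hs.1 hx.1, lt_of_le_of_lt hx.2 hr.2⟩
    have hmono : AntitoneOn F (Icc s r) := by
      apply antitoneOn_of_deriv_nonpos (convex_Icc s r)
      · intro x hx
        exact (hF x (hsub hx)).continuousAt.continuousWithinAt
      · intro x hx
        rw [interior_Icc] at hx
        exact (hF x (hsub ⟨le_of_lt hx.1, le_of_lt hx.2⟩)).differentiableAt.differentiableWithinAt
      · intro x hx
        rw [interior_Icc] at hx
        have hmem := hsub ⟨le_of_lt hx.1, le_of_lt hx.2⟩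
        rw [(hF x hmem).deriv]
        exact hF' x hmem
    exact hmono ⟨le_refl s, le_of_lt hs.2⟩ ⟨le_of_lt hs.2, le_refl r⟩ (le_of_lt hs.2)
  exact ge_of_tendsto hlim (Filter.eventually_of_mem (Ioo_mem_nhdsGT_of_mem ⟨le_refl 0, hr.1⟩) key)

lemma int_ge {F F' : ℝ → ℝ} {b L : ℝ}
    (hF : ∀ x ∈ Ioo (0:ℝ) b, HasDerivAt F (F' x) x)
    (hF' : ∀ x ∈ Ioo (0:ℝ) b, 0 ≤ F' x)
    (hlim : Tendsto F (𝓝[>](0:ℝ)) (𝓝 L)) :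
    ∀ r ∈ Ioo (0:ℝ) b, L ≤ F r := by
  intro r hr
  have := int_le (F := fun x => -F x) (F' := fun x => -F' x) (b := b) (L := -L)
    (fun x hx => (hF x hx).neg) (fun x hx => neg_nonpos.mpr (hF' x hx)) hlim.neg r hr
  have h2 : -F r ≤ -L := this
  linarith

lemma delta_facts {c₀ lam p w₀' : ℝ} (hw₀ : 0 < w₀')
    (hQneg : ∀ t ∈ Set.Icc (0:ℝ) w₀', Qpoly c₀ lam p t < 0) :
    0 < deltaPlus c₀ lam p w₀' ∧
    (∀ t ∈ Set.Icc (0:ℝ) w₀', deltaPlus c₀ lam p w₀' ≤ -Qpoly c₀ lam p t) ∧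
    (∀ t ∈ Set.Icc (0:ℝ) w₀', -Qpoly c₀ lam p t ≤ muQ c₀ lam p w₀') := by
  have hcont : Continuous (fun t => -Qpoly c₀ lam p t) := by unfold Qpoly; continuity
  have hcomp : IsCompact ((fun t => -Qpoly c₀ lam p t) '' Set.Icc 0 w₀') :=
    isCompact_Icc.image hcont
  have hne : ((fun t => -Qpoly c₀ lam p t) '' Set.Icc 0 w₀').Nonempty :=
    (nonempty_Icc.mpr (le_of_lt hw₀)).image _
  refine ⟨?_, fun t ht => csInf_le hcomp.bddBelow (mem_image_of_mem _ ht),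
    fun t ht => le_csSup hcomp.bddAbove (mem_image_of_mem _ ht)⟩
  obtain ⟨t, ht, hval⟩ := hcomp.sInf_mem hne
  rw [deltaPlus, ← hval]
  show 0 < -Qpoly c₀ lam p t
  linarith [hQneg t ht]

lemma final_algebra {w₀' δ μ ξ m R : ℝ} (hw₀ : 0 < w₀') (hδ : 0 < δ)
    (hμδ : δ ≤ μ) (hξδ : ξ * δ = δ - 64 * w₀' ^ 3 / 27) (hξ : 0 < ξ)
    (hm : m = μ - ξ * δ / 4)
    (hR : 16 * ξ * w₀' / (3 * (w₀' ^ 3 + μ)) ≤ R) :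
    0 < m ∧ 4 * ξ * w₀' / m * (1 - w₀' ^ 3 / (3 * m)) ≤ R := by
  have hu : 0 < w₀' ^ 3 := by positivity
  have hξ1 : ξ * δ < δ := by nlinarith
  have hmpos : 0 < m := by nlinarith
  have hA : 0 < w₀' ^ 3 + μ := by nlinarith
  -- key quadratic inequality : 4 m² - 3 A m + A u ≥ 0 with A = u + μ, u = w₀'^3
  have hkey : 0 ≤ 4 * m ^ 2 - 3 * (w₀' ^ 3 + μ) * m + (w₀' ^ 3 + μ) * w₀' ^ 3 := by
    have h1 : 0 ≤ m - (3 * (w₀' ^ 3 + μ) / 4 - w₀' ^ 3 / 3) := by nlinarith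
    have h2 : 0 ≤ 3 * (w₀' ^ 3 + μ) - 8 * w₀' ^ 3 / 3 := by nlinarith
    nlinarith [mul_nonneg h1 h1, mul_nonneg h1 h2, sq_nonneg w₀']
  refine ⟨hmpos, le_trans ?_ hR⟩
  have h1 : (1 : ℝ) - w₀' ^ 3 / (3 * m) = (3 * m - w₀' ^ 3) / (3 * m) := by field_simp
  rw [h1, div_mul_div_comm, div_le_div_iff₀ (by positivity) (by positivity)]
  nlinarith [mul_nonneg (mul_nonneg (le_of_lt hξ) (le_of_lt hw₀)) hkey]

lemma main_core {c₀ lam p w₀' δ μ ξ : ℝ} {rstar : EReal} {w : ℝ → ℝ}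
    (hsol : IsProfileSolution c₀ lam p w₀' rstar w)
    (hw₀ : 0 < w₀')
    (hQneg : ∀ t ∈ Set.Icc (0:ℝ) w₀', Qpoly c₀ lam p t < 0)
    (hδpos : 0 < δ)
    (hδle : ∀ t ∈ Set.Icc (0:ℝ) w₀', δ ≤ -Qpoly c₀ lam p t)
    (hμge : ∀ t ∈ Set.Icc (0:ℝ) w₀', -Qpoly c₀ lam p t ≤ μ)
    (hxi : 0 < ξ)
    (hξδ : ξ * δ = δ - 64 * w₀' ^ 3 / 27)
    {r₀ rM : ℝ} (hr₀ : IsFirstZero rstar w r₀) (hrM : IsFirstCrit w r₀ rM) :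
    16 * ξ * w₀' / (3 * (w₀' ^ 3 + μ)) ≤ rM ^ 2 := by
  have hr₀pos : 0 < r₀ := hr₀.1
  have hsub : Ioo 0 r₀ ⊆ profDom rstar := fun x hx =>
    ⟨hx.1, lt_trans (EReal.coe_lt_coe_iff.mpr hx.2) hr₀.2.1⟩
  have hwpos : ∀ x ∈ Ioo 0 r₀, 0 < w x := hr₀.2.2.1
  have hκpos : ∀ x ∈ Ioo 0 r₀, 0 < kappaFun w x := fun x hx =>
    div_pos (hwpos x hx) (mul_pos hx.1 (Spos w x))
  have h0mem : (0:ℝ) ∈ Icc (0:ℝ) w₀' := ⟨le_refl 0, le_of_lt hw₀⟩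
  have hδμ : δ ≤ μ := le_trans (hδle 0 h0mem) (hμge 0 h0mem)
  have hμpos : 0 < μ := lt_of_lt_of_le hδpos hδμ
  -- ε such that Q < 0 on [0, w₀' + ε]
  obtain ⟨ε, hεpos, hQε⟩ : ∃ ε > 0, ∀ t, 0 ≤ t → t ≤ w₀' + ε → Qpoly c₀ lam p t < 0 := by
    have hcQ : Continuous (Qpoly c₀ lam p) := by unfold Qpoly; continuity
    have h1 : Qpoly c₀ lam p ⁻¹' Iio 0 ∈ 𝓝 w₀' :=
      hcQ.continuousAt.preimage_mem_nhds
        (Iio_mem_nhds (hQneg w₀' ⟨le_of_lt hw₀, le_refl _⟩))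
    obtain ⟨ε', hε'pos, hball⟩ := Metric.mem_nhds_iff.mp h1
    refine ⟨ε'/2, by positivity, fun t ht0 htle => ?_⟩
    rcases le_or_gt t w₀' with h | h
    · exact hQneg t ⟨ht0, h⟩
    · have : t ∈ Metric.ball w₀' ε' := by
        rw [Metric.mem_ball, Real.dist_eq, abs_of_pos (by linarith)]
        linarith
      have h2 := hball this
      simpa using h2
  -- Step 1
  have step1 : ∀ b, 0 < b → b ≤ r₀ → (∀ x ∈ Ioo 0 b, kappaFun w x < w₀' + ε) →
      (∀ r ∈ Ioo 0 b, Gfun w r ≤ 0) ∧ (∀ r ∈ Ioo 0 b, kappaFun w r ≤ w₀') := by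
    intro b hb hble hκlt
    have hsubb : Ioo 0 b ⊆ Ioo 0 r₀ := fun x hx => ⟨hx.1, lt_of_lt_of_le hx.2 hble⟩
    have hGd : ∀ x ∈ Ioo (0:ℝ) b, HasDerivAt (Gfun w) (Gder c₀ lam p w x) x :=
      fun x hx => hG_deriv hsol (hsub (hsubb hx))
    have hGd0 : ∀ x ∈ Ioo (0:ℝ) b, Gder c₀ lam p w x ≤ 0 := by
      intro x hx
      have hx' := hsubb hx
      have hwx := hwpos x hx'
      have hT : 0 ≤ x ^ 2 / 2 * (w x * deriv w x ^ 2 / Sfun w x ^ 5) := by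
        have hs := Spos w x
        positivity
      have hQ : Qpoly c₀ lam p (kappaFun w x) < 0 :=
        hQε _ (le_of_lt (hκpos x hx')) (le_of_lt (hκlt x hx))
      have hb1 : (0:ℝ) ≤ x ^ 3 / 2 * Sfun w x ^ 2 := by
        have := hx.1
        positivity
      have h2 : x ^ 3 / 2 * Sfun w x ^ 2 * Qpoly c₀ lam p (kappaFun w x) ≤ 0 := by
        nlinarith [mul_nonneg hb1 (neg_nonneg.mpr (le_of_lt hQ))]
      rw [Gder]
      linarith
    have hGle := int_le hGd hGd0 (limG hsol)
    refine ⟨hGle, ?_⟩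
    have hκd : ∀ x ∈ Ioo (0:ℝ) b, HasDerivAt (kappaFun w) ((fun y => Gfun w y / y ^ 3) x) x := by
      intro x hx
      have h := hkappa_deriv (hw_deriv hsol (hsub (hsubb hx))) (ne_of_gt hx.1)
      refine h.congr_deriv ?_
      simp only [Gfun]
      field_simp [ne_of_gt hx.1, ne_of_gt (Spos w x)]
    have hκd0 : ∀ x ∈ Ioo (0:ℝ) b, (fun y => Gfun w y / y ^ 3) x ≤ 0 := fun x hx =>
      div_nonpos_iff.mpr (Or.inr ⟨hGle x hx, le_of_lt (pow_pos hx.1 3)⟩)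
    exact int_le hκd hκd0 (limkappa hsol hr₀pos hsub)
  -- first-crossing: κ < w₀' + ε on (0, r₀)
  have hκltε : ∀ r ∈ Ioo 0 r₀, kappaFun w r < w₀' + ε := by
    by_contra hcon
    push_neg at hcon
    obtain ⟨b₀, hb₀, hκb₀⟩ := hcon
    have hev : ∀ᶠ x in 𝓝[>](0:ℝ), kappaFun w x < w₀' + ε :=
      (limkappa hsol hr₀pos hsub).eventually_lt_const (by linarith)
    obtain ⟨a, ha0, ha⟩ := mem_nhdsGT_iff_exists_Ioo_subset.mp hev
    have ha0' : 0 < a := ha0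
    have hab₀ : a ≤ b₀ := by
      by_contra hab
      push_neg at hab
      exact absurd (ha ⟨hb₀.1, hab⟩) (not_lt.mpr hκb₀)
    set B := Icc a b₀ ∩ kappaFun w ⁻¹' Ici (w₀' + ε) with hBdef
    have hκcont : ContinuousOn (kappaFun w) (Icc a b₀) := by
      intro y hy
      have hy' : y ∈ Ioo 0 r₀ := ⟨lt_of_lt_of_le ha0' hy.1, lt_of_le_of_lt hy.2 hb₀.2⟩
      exact (hkappa_deriv (hw_deriv hsol (hsub hy')) (ne_of_gt hy'.1)).continuousAt.continuousWithinAt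
    have hBclosed : IsClosed B := hκcont.preimage_isClosed_of_isClosed isClosed_Icc isClosed_Ici
    have hBcomp : IsCompact B := IsCompact.of_isClosed_subset isCompact_Icc hBclosed inter_subset_left
    have hBne : B.Nonempty := ⟨b₀, ⟨hab₀, le_refl _⟩, hκb₀⟩
    set r₂ := sInf B with hr₂def
    have hr₂mem : r₂ ∈ B := hBcomp.sInf_mem hBne
    have hr₂a : a ≤ r₂ := hr₂mem.1.1
    have hr₂pos : 0 < r₂ := lt_of_lt_of_le ha0' hr₂a
    have hr₂lt : r₂ < r₀ := lt_of_le_of_lt hr₂mem.1.2 hb₀.2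
    have hbelow : ∀ x ∈ Ioo (0:ℝ) r₂, kappaFun w x < w₀' + ε := by
      intro x hx
      rcases lt_or_ge x a with h | h
      · exact ha ⟨hx.1, h⟩
      · by_contra hge
        push_neg at hge
        have hxB : x ∈ B := ⟨⟨h, le_trans (le_of_lt hx.2) hr₂mem.1.2⟩, hge⟩
        exact absurd (csInf_le hBcomp.bddBelow hxB) (not_le.mpr hx.2)
    have hκler₂ := (step1 r₂ hr₂pos (le_of_lt hr₂lt) hbelow).2
    have hκr₂ : kappaFun w r₂ ≤ w₀' := by
      have hcont2 : ContinuousAt (kappaFun w) r₂ :=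
        (hkappa_deriv (hw_deriv hsol (hsub ⟨hr₂pos, hr₂lt⟩)) (ne_of_gt hr₂pos)).continuousAt
      have htd : Tendsto (kappaFun w) (𝓝[<] r₂) (𝓝 (kappaFun w r₂)) :=
        hcont2.continuousWithinAt.tendsto
      exact le_of_tendsto htd (Filter.eventually_of_mem
        (Ioo_mem_nhdsLT_of_mem ⟨hr₂pos, le_refl r₂⟩) (fun x hx => hκler₂ x hx))
    have := hr₂mem.2
    rw [mem_preimage, mem_Ici] at this
    linarith
  obtain ⟨hGle, hκle⟩ := step1 r₀ hr₀pos (le_refl r₀) hκltε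
  -- refined upper bounds
  have hκIcc : ∀ x ∈ Ioo 0 r₀, kappaFun w x ∈ Icc (0:ℝ) w₀' :=
    fun x hx => ⟨le_of_lt (hκpos x hx), hκle x hx⟩
  have hGder_le : ∀ x ∈ Ioo 0 r₀, Gder c₀ lam p w x ≤ -(δ/2) * x ^ 3 := by
    intro x hx
    have hQδ : Qpoly c₀ lam p (kappaFun w x) ≤ -δ := by
      have := hδle _ (hκIcc x hx); linarith
    have hS1 : 1 ≤ Sfun w x := Sone w x
    have hT : 0 ≤ x ^ 2 / 2 * (w x * deriv w x ^ 2 / Sfun w x ^ 5) := by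
      have hs := Spos w x
      have := hwpos x hx
      positivity
    have h2 : Sfun w x ^ 2 * Qpoly c₀ lam p (kappaFun w x) ≤ -δ := by
      nlinarith [mul_nonneg (by nlinarith : (0:ℝ) ≤ Sfun w x ^ 2 - 1)
        (by linarith : (0:ℝ) ≤ -Qpoly c₀ lam p (kappaFun w x))]
    have h3 : x ^ 3 / 2 * (Sfun w x ^ 2 * Qpoly c₀ lam p (kappaFun w x)) ≤ x ^ 3 / 2 * (-δ) :=
      mul_le_mul_of_nonneg_left h2 (by have := hx.1; positivity)
    rw [Gder]
    nlinarith
  have hGle2 : ∀ r ∈ Ioo 0 r₀, Gfun w r ≤ -(δ/8) * r ^ 4 := by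
    have hF : ∀ x ∈ Ioo (0:ℝ) r₀, HasDerivAt (fun y => Gfun w y + δ/8 * y ^ 4)
        ((fun y => Gder c₀ lam p w y + δ/2 * y ^ 3) x) x := by
      intro x hx
      have h4 : HasDerivAt (fun y : ℝ => δ/8 * y ^ 4) (δ/2 * x ^ 3) x := by
        have := (hasDerivAt_pow 4 x).const_mul (δ/8)
        refine this.congr_deriv ?_
        push_cast
        ring
      exact (hG_deriv hsol (hsub hx)).add h4
    have hF' : ∀ x ∈ Ioo (0:ℝ) r₀, (fun y => Gder c₀ lam p w y + δ/2 * y ^ 3) x ≤ 0 := by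
      intro x hx
      have := hGder_le x hx
      simp only
      linarith
    have hlim : Tendsto (fun y => Gfun w y + δ/8 * y ^ 4) (𝓝[>](0:ℝ)) (𝓝 0) := by
      have h4 : Tendsto (fun y : ℝ => δ/8 * y ^ 4) (𝓝[>](0:ℝ)) (𝓝 0) := by
        have hc : Continuous (fun y : ℝ => δ/8 * y ^ 4) := continuous_const.mul (continuous_pow 4)
        have := (hc.tendsto 0).mono_left (nhdsWithin_le_nhds (s := Ioi (0:ℝ)))
        norm_num at this
        exact this
      have := (limG hsol).add h4
      norm_num at this
      exact this
    intro r hr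
    have := int_le hF hF' hlim r hr
    linarith
  have hκle2 : ∀ r ∈ Ioo 0 r₀, kappaFun w r ≤ w₀' - δ/16 * r ^ 2 := by
    have hF : ∀ x ∈ Ioo (0:ℝ) r₀, HasDerivAt (fun y => kappaFun w y + δ/16 * y ^ 2)
        ((fun y => Gfun w y / y ^ 3 + δ/8 * y) x) x := by
      intro x hx
      have h4 : HasDerivAt (fun y : ℝ => δ/16 * y ^ 2) (δ/8 * x) x := by
        have := (hasDerivAt_pow 2 x).const_mul (δ/16)
        refine this.congr_deriv ?_
        push_cast
        ring
      have hκd : HasDerivAt (kappaFun w) (Gfun w x / x ^ 3) x := by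
        have h := hkappa_deriv (hw_deriv hsol (hsub hx)) (ne_of_gt hx.1)
        refine h.congr_deriv ?_
        simp only [Gfun]
        field_simp [ne_of_gt hx.1, ne_of_gt (Spos w x)]
      exact hκd.add h4
    have hF' : ∀ x ∈ Ioo (0:ℝ) r₀, (fun y => Gfun w y / y ^ 3 + δ/8 * y) x ≤ 0 := by
      intro x hx
      simp only
      have hx3 : (0:ℝ) < x ^ 3 := pow_pos hx.1 3
      have hdiv : Gfun w x / x ^ 3 ≤ -(δ/8) * x := by
        rw [div_le_iff₀ hx3]
        nlinarith [hGle2 x hx]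
      linarith
    have hlim : Tendsto (fun y => kappaFun w y + δ/16 * y ^ 2) (𝓝[>](0:ℝ)) (𝓝 w₀') := by
      have h4 : Tendsto (fun y : ℝ => δ/16 * y ^ 2) (𝓝[>](0:ℝ)) (𝓝 0) := by
        have hc : Continuous (fun y : ℝ => δ/16 * y ^ 2) := continuous_const.mul (continuous_pow 2)
        have := (hc.tendsto 0).mono_left (nhdsWithin_le_nhds (s := Ioi (0:ℝ)))
        norm_num at this
        exact this
      have := (limkappa hsol hr₀pos hsub).add h4
      norm_num at this
      exact this
    intro r hr
    have := int_le hF hF' hlim r hr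
    linarith
  -- positivity of w' on (0, rM)
  have hrMr₀ : rM < r₀ := hrM.1.2
  have hrMpos : 0 < rM := hrM.1.1
  have hsubM : Ioo 0 rM ⊆ Ioo 0 r₀ := fun x hx => ⟨hx.1, lt_trans hx.2 hrMr₀⟩
  have hw'pos : ∀ x ∈ Ioo 0 rM, 0 < deriv w x := by
    intro x hx
    rcases lt_or_ge 0 (deriv w x) with h | h
    · exact h
    have hlt : deriv w x < 0 := lt_of_le_of_ne h (hrM.2.2 x hx)
    have hev : ∀ᶠ y in 𝓝[>](0:ℝ), 0 < deriv w y :=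
      hsol.lim_w'.eventually_const_lt hw₀
    obtain ⟨a, ha0, ha⟩ := mem_nhdsGT_iff_exists_Ioo_subset.mp hev
    have ha0' : (0:ℝ) < a := ha0
    have hmin : 0 < min a x := lt_min ha0' hx.1
    set s := min a x / 2 with hsdef
    have hs0 : 0 < s := by positivity
    have hsa : s < a := by
      have h1 : min a x ≤ a := min_le_left a x
      have : s ≤ a / 2 := by rw [hsdef]; linarith
      linarith
    have hsx : s < x := by
      have h1 : min a x ≤ x := min_le_right a x
      have : s ≤ x / 2 := by rw [hsdef]; linarith
      linarith [hx.1]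
    have hds : 0 < deriv w s := ha ⟨hs0, hsa⟩
    have hcont : ContinuousOn (deriv w) (Icc s x) := by
      intro y hy
      have hy' : y ∈ Ioo 0 r₀ :=
        ⟨lt_of_lt_of_le hs0 hy.1, lt_of_le_of_lt hy.2 (lt_trans hx.2 hrMr₀)⟩
      exact (hw_deriv2 hsol (hsub hy')).continuousAt.continuousWithinAt
    have h0m : (0:ℝ) ∈ Icc (deriv w x) (deriv w s) := ⟨le_of_lt hlt, le_of_lt hds⟩
    obtain ⟨c, hc, hc0⟩ := intermediate_value_Icc' (le_of_lt hsx) hcont h0m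
    exact absurd hc0 (hrM.2.2 c ⟨lt_of_lt_of_le hs0 hc.1, lt_of_le_of_lt hc.2 hx.2⟩)
  -- bound 1 - v² ≥ ξ, i.e. ξ S² ≤ 1
  have hv2le : ∀ x ∈ Ioo 0 r₀, (vfun w x) ^ 2 ≤ 1 - ξ := by
    intro x hx
    have hκub := hκle2 x hx
    have hκp := hκpos x hx
    have hy0 : (0:ℝ) ≤ δ/16 * x ^ 2 := by positivity
    have hylt : δ/16 * x ^ 2 ≤ w₀' := by nlinarith
    have h27 : (δ/16 * x ^ 2) * (w₀' - δ/16 * x ^ 2) ^ 2 ≤ 4 * w₀' ^ 3 / 27 := by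
      nlinarith [mul_nonneg (by nlinarith : (0:ℝ) ≤ 4 * w₀' / 3 - δ/16 * x ^ 2)
        (sq_nonneg (δ/16 * x ^ 2 - w₀'/3))]
    have hvx : vfun w x = x * kappaFun w x := v_eq_r_kappa (ne_of_gt hx.1)
    have hκsq : kappaFun w x ^ 2 ≤ (w₀' - δ/16 * x ^ 2) ^ 2 := by nlinarith
    have h3 : δ * (vfun w x) ^ 2 ≤ δ * (1 - ξ) := by
      have h1ξ : δ * (1 - ξ) = 64 * w₀' ^ 3 / 27 := by linear_combination -hξδ
      rw [h1ξ, hvx]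
      nlinarith [mul_le_mul_of_nonneg_left hκsq
        (by positivity : (0:ℝ) ≤ δ * x ^ 2), h27, hx.1]
    exact le_of_mul_le_mul_left h3 hδpos
  have hξS : ∀ x ∈ Ioo 0 r₀, ξ * Sfun w x ^ 2 ≤ 1 := by
    intro x hx
    have hv2eq : (vfun w x) ^ 2 * Sfun w x ^ 2 = Sfun w x ^ 2 - 1 := by
      rw [vfun, div_pow]
      rw [div_mul_cancel₀ _ (pow_ne_zero 2 (ne_of_gt (Spos w x)))]
      linarith [Ssq w x]
    nlinarith [mul_le_mul_of_nonneg_right (hv2le x hx) (sq_nonneg (Sfun w x)), hv2eq]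
  -- lower bound on Gder on (0, rM)
  have hδμ' : 0 < w₀' ^ 3 + μ := by positivity
  obtain ⟨M, hξM, hMpos, hMeq⟩ : ∃ M : ℝ, ξ * M = w₀' ^ 3 + μ ∧ 0 < M ∧
      M = w₀' ^ 3 * (1/ξ) + μ/ξ := by
    have hξ0 : ξ ≠ 0 := ne_of_gt hxi
    refine ⟨(w₀' ^ 3 + μ) / ξ, by field_simp, by positivity, by field_simp⟩
  have hGder_ge : ∀ x ∈ Ioo 0 rM, -(M/2) * x ^ 3 ≤ Gder c₀ lam p w x := by
    intro x hx
    have hx0 : 0 < x := hx.1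
    have hx' := hsubM hx
    have hwx := hwpos x hx'
    have hκp := hκpos x hx'
    have hκub := hκle x hx'
    have hS := Spos w x
    have hS2le : Sfun w x ^ 2 ≤ 1 / ξ := by
      rw [le_div_iff₀ hxi]
      linarith [hξS x hx']
    have hvx : vfun w x = x * kappaFun w x := v_eq_r_kappa (ne_of_gt hx.1)
    have hvpos : 0 < vfun w x := by rw [hvx]; exact mul_pos hx.1 hκp
    have hvle : vfun w x ≤ x * w₀' := by
      rw [hvx]
      nlinarith [hx.1]
    -- v' ≤ κ
    have hv'le : deriv w x / Sfun w x ^ 3 ≤ kappaFun w x := by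
      have hG0 := hGle x hx'
      rw [Gfun, hvx] at hG0
      nlinarith [mul_pos hx.1 hx.1]
    have hv'pos : 0 < deriv w x / Sfun w x ^ 3 :=
      div_pos (hw'pos x hx) (pow_pos hS 3)
    have hA2 : (deriv w x / Sfun w x ^ 3) ^ 2 ≤ w₀' ^ 2 := by nlinarith
    -- T identity and bound
    have hTid : w x * deriv w x ^ 2 / Sfun w x ^ 5 =
        (deriv w x / Sfun w x ^ 3) ^ 2 * (vfun w x * Sfun w x ^ 2) := by
      rw [vfun]
      field_simp
    have hvS2 : vfun w x * Sfun w x ^ 2 ≤ x * w₀' * (1/ξ) := by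
      have h9 : Sfun w x ^ 2 ≤ 1/ξ := hS2le
      have h8 : (0:ℝ) ≤ x * w₀' := by positivity
      exact mul_le_mul hvle h9 (sq_nonneg _) h8
    have hTle : w x * deriv w x ^ 2 / Sfun w x ^ 5 ≤ w₀' ^ 2 * (x * w₀' * (1/ξ)) := by
      rw [hTid]
      exact mul_le_mul hA2 hvS2 (by positivity) (by positivity)
    -- Q term
    have hQge : -μ ≤ Qpoly c₀ lam p (kappaFun w x) := by
      have := hμge _ (hκIcc x hx'); linarith
    have hSQ : -(μ/ξ) ≤ Sfun w x ^ 2 * Qpoly c₀ lam p (kappaFun w x) := by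
      have h1 : Sfun w x ^ 2 * (-μ) ≤ Sfun w x ^ 2 * Qpoly c₀ lam p (kappaFun w x) :=
        mul_le_mul_of_nonneg_left hQge (sq_nonneg _)
      have h2 : -(μ/ξ) ≤ Sfun w x ^ 2 * (-μ) := by
        have h3 := mul_le_mul_of_nonneg_right hS2le (le_of_lt hμpos)
        have h4 : (1/ξ) * μ = μ/ξ := by ring
        nlinarith [h3]
      linarith
    rw [Gder]
    have h5 : x ^ 2 / 2 * (w x * deriv w x ^ 2 / Sfun w x ^ 5) ≤
        x ^ 2 / 2 * (w₀' ^ 2 * (x * w₀' * (1/ξ))) :=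
      mul_le_mul_of_nonneg_left hTle (by positivity)
    have h6 : x ^ 3 / 2 * (-(μ/ξ)) ≤
        x ^ 3 / 2 * (Sfun w x ^ 2 * Qpoly c₀ lam p (kappaFun w x)) :=
      mul_le_mul_of_nonneg_left hSQ (by positivity)
    have hMx : -(M/2) * x ^ 3 = -(x ^ 2/2 * (w₀' ^ 2 * (x * w₀' * (1/ξ))))
        - x ^ 3/2 * (μ/ξ) := by rw [hMeq]; ring
    rw [hMx]
    linarith [h5, h6]
  -- integrate lower bounds on (0, rM)
  have hGge : ∀ r ∈ Ioo 0 rM, -(M/8) * r ^ 4 ≤ Gfun w r := by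
    have hF : ∀ x ∈ Ioo (0:ℝ) rM, HasDerivAt (fun y => Gfun w y + M/8 * y ^ 4)
        ((fun y => Gder c₀ lam p w y + M/2 * y ^ 3) x) x := by
      intro x hx
      have h4 : HasDerivAt (fun y : ℝ => M/8 * y ^ 4) (M/2 * x ^ 3) x := by
        have := (hasDerivAt_pow 4 x).const_mul (M/8)
        refine this.congr_deriv ?_
        push_cast
        ring
      exact (hG_deriv hsol (hsub (hsubM hx))).add h4
    have hF' : ∀ x ∈ Ioo (0:ℝ) rM, 0 ≤ (fun y => Gder c₀ lam p w y + M/2 * y ^ 3) x := by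
      intro x hx
      have := hGder_ge x hx
      simp only
      linarith
    have hlim : Tendsto (fun y => Gfun w y + M/8 * y ^ 4) (𝓝[>](0:ℝ)) (𝓝 0) := by
      have h4 : Tendsto (fun y : ℝ => M/8 * y ^ 4) (𝓝[>](0:ℝ)) (𝓝 0) := by
        have hc : Continuous (fun y : ℝ => M/8 * y ^ 4) := continuous_const.mul (continuous_pow 4)
        have := (hc.tendsto 0).mono_left (nhdsWithin_le_nhds (s := Ioi (0:ℝ)))
        norm_num at this
        exact this
      have := (limG hsol).add h4
      norm_num at this
      exact this
    intro r hr
    have := int_ge hF hF' hlim r hr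
    linarith
  have hκge : ∀ r ∈ Ioo 0 rM, w₀' - M/16 * r ^ 2 ≤ kappaFun w r := by
    have hF : ∀ x ∈ Ioo (0:ℝ) rM, HasDerivAt (fun y => kappaFun w y + M/16 * y ^ 2)
        ((fun y => Gfun w y / y ^ 3 + M/8 * y) x) x := by
      intro x hx
      have h4 : HasDerivAt (fun y : ℝ => M/16 * y ^ 2) (M/8 * x) x := by
        have := (hasDerivAt_pow 2 x).const_mul (M/16)
        refine this.congr_deriv ?_
        push_cast
        ring
      have hκd : HasDerivAt (kappaFun w) (Gfun w x / x ^ 3) x := by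
        have h := hkappa_deriv (hw_deriv hsol (hsub (hsubM hx))) (ne_of_gt hx.1)
        refine h.congr_deriv ?_
        simp only [Gfun]
        field_simp [ne_of_gt hx.1, ne_of_gt (Spos w x)]
      exact hκd.add h4
    have hF' : ∀ x ∈ Ioo (0:ℝ) rM, 0 ≤ (fun y => Gfun w y / y ^ 3 + M/8 * y) x := by
      intro x hx
      simp only
      have hx3 : (0:ℝ) < x ^ 3 := pow_pos hx.1 3
      have hdiv : -(M/8) * x ≤ Gfun w x / x ^ 3 := by
        rw [le_div_iff₀ hx3]
        nlinarith [hGge x hx]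
      linarith
    have hlim : Tendsto (fun y => kappaFun w y + M/16 * y ^ 2) (𝓝[>](0:ℝ)) (𝓝 w₀') := by
      have h4 : Tendsto (fun y : ℝ => M/16 * y ^ 2) (𝓝[>](0:ℝ)) (𝓝 0) := by
        have hc : Continuous (fun y : ℝ => M/16 * y ^ 2) := continuous_const.mul (continuous_pow 2)
        have := (hc.tendsto 0).mono_left (nhdsWithin_le_nhds (s := Ioi (0:ℝ)))
        norm_num at this
        exact this
      have := (limkappa hsol hr₀pos hsub).add h4
      norm_num at this
      exact this
    intro r hr
    have := int_ge hF hF' hlim r hr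
    linarith
  -- endpoint rM
  have hrMmem : rM ∈ Ioo 0 r₀ := hrM.1
  have hκcM : ContinuousAt (kappaFun w) rM :=
    (hkappa_deriv (hw_deriv hsol (hsub hrMmem)) (ne_of_gt hrMpos)).continuousAt
  have hGcM : ContinuousAt (Gfun w) rM := (hG_deriv hsol (hsub hrMmem)).continuousAt
  have hκatM : w₀' - M/16 * rM ^ 2 ≤ kappaFun w rM := by
    have hc : ContinuousAt (fun y => kappaFun w y + M/16 * y ^ 2) rM :=
      hκcM.add ((continuous_const.mul (continuous_pow 2)).continuousAt)
    have htd : Tendsto (fun y => kappaFun w y + M/16 * y ^ 2) (𝓝[<] rM)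
        (𝓝 (kappaFun w rM + M/16 * rM ^ 2)) := hc.continuousWithinAt.tendsto
    have hev : ∀ᶠ y in 𝓝[<] rM, w₀' ≤ kappaFun w y + M/16 * y ^ 2 :=
      Filter.eventually_of_mem (Ioo_mem_nhdsLT_of_mem ⟨hrMpos, le_refl rM⟩)
        (fun y hy => by linarith [hκge y hy])
    linarith [ge_of_tendsto htd hev]
  have hGatM : -(M/8) * rM ^ 4 ≤ Gfun w rM := by
    have hc : ContinuousAt (fun y => Gfun w y + M/8 * y ^ 4) rM :=
      hGcM.add ((continuous_const.mul (continuous_pow 4)).continuousAt)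
    have htd : Tendsto (fun y => Gfun w y + M/8 * y ^ 4) (𝓝[<] rM)
        (𝓝 (Gfun w rM + M/8 * rM ^ 4)) := hc.continuousWithinAt.tendsto
    have hev : ∀ᶠ y in 𝓝[<] rM, 0 ≤ Gfun w y + M/8 * y ^ 4 :=
      Filter.eventually_of_mem (Ioo_mem_nhdsLT_of_mem ⟨hrMpos, le_refl rM⟩)
        (fun y hy => by linarith [hGge y hy])
    linarith [ge_of_tendsto htd hev]
  have hGrM : Gfun w rM = -(rM ^ 2) * kappaFun w rM := by
    rw [Gfun, hrM.2.1, v_eq_r_kappa (ne_of_gt hrMpos)]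
    field_simp
    ring
  have hκMub : kappaFun w rM ≤ M/8 * rM ^ 2 := by
    rw [hGrM] at hGatM
    have h1 : rM ^ 2 * kappaFun w rM ≤ rM ^ 2 * (M/8 * rM ^ 2) := by nlinarith
    exact le_of_mul_le_mul_left h1 (by positivity)
  have hfin : w₀' ≤ 3 * M / 16 * rM ^ 2 := by linarith
  rw [div_le_iff₀ (by positivity)]
  nlinarith [mul_le_mul_of_nonneg_left hfin (by positivity : (0:ℝ) ≤ 16 * ξ), hξM]


/-- Lower bound for the first critical point `r_M` and the first zero `r₀`:
with `m = μ(w₀') − ξ(w₀')·δ₊(w₀')/4 > 0`, one has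
`r₀² ≥ r_M² ≥ (4·ξ(w₀')·w₀'/m)·(1 − w₀'³/(3m))`. -/
theorem stmt6 (c₀ lam p w₀' : ℝ) (hp : 0 < p)
    (hroots : ∀ t : ℝ, Qpoly c₀ lam p t = 0 → 0 < t)
    (hw₀ : 0 < w₀')
    (hQneg : ∀ t ∈ Set.Icc (0 : ℝ) w₀', Qpoly c₀ lam p t < 0)
    (hxi : 0 < xiQ c₀ lam p w₀')
    (rstar : EReal) (w : ℝ → ℝ)
    (hsol : IsProfileSolution c₀ lam p w₀' rstar w)
    (r₀ : ℝ) (hr₀ : IsFirstZero rstar w r₀)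
    (rM : ℝ) (hrM : IsFirstCrit w r₀ rM) :
    ∀ m : ℝ, m = muQ c₀ lam p w₀' - xiQ c₀ lam p w₀' * deltaPlus c₀ lam p w₀' / 4 →
      0 < m ∧ rM ^ 2 ≤ r₀ ^ 2 ∧
        4 * xiQ c₀ lam p w₀' * w₀' / m * (1 - w₀' ^ 3 / (3 * m)) ≤ rM ^ 2 := by
  intro m hm
  obtain ⟨hδpos, hδle, hμge⟩ := delta_facts hw₀ hQneg
  have hδ0 : deltaPlus c₀ lam p w₀' ≠ 0 := ne_of_gt hδpos
  have hξδ : xiQ c₀ lam p w₀' * deltaPlus c₀ lam p w₀' =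
      deltaPlus c₀ lam p w₀' - 64 * w₀' ^ 3 / 27 := by
    rw [xiQ]
    field_simp
  have hcore := main_core hsol hw₀ hQneg hδpos hδle hμge hxi hξδ hr₀ hrM
  have h0mem : (0:ℝ) ∈ Set.Icc (0:ℝ) w₀' := ⟨le_refl 0, le_of_lt hw₀⟩
  have hδμ : deltaPlus c₀ lam p w₀' ≤ muQ c₀ lam p w₀' :=
    le_trans (hδle 0 h0mem) (hμge 0 h0mem)
  obtain ⟨hmpos, hfinal⟩ := final_algebra hw₀ hδpos hδμ hξδ hxi hm hcore
  exact ⟨hmpos, pow_le_pow_left₀ (le_of_lt hrM.1.1) (le_of_lt hrM.1.2) 2, hfinal⟩
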